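/- arXiv:1609.09336 — 3 statements merged into one kernel-verified Lean document; each statement's English description precedes it below -/
import Mathlib

section
/- Let r ≥ 1, let α_1,…,α_r be real orders, y_1,…,y_r real numbers with y_s ≠ α_s/2 for each s, and n_1,…,n_r nonnegative integers. If n_1 + ⋯ + n_r is even (so that n_1+⋯+n_r+1 is odd), then (1/(n_1!⋯n_r!)) ∫_0^1 ∏_{s=1}^r E_{n_s}^{(α_s)}((α_s − 2y_s) z + y_s) dz = −2 Σ_{a=0}^{n_1+⋯+n_{r−1}} (−1)^a ((α_r − 2y_r)^{−a−1}/(n_r+a+1)!) E_{n_r+a+1}^{(α_r)}(y_r) · Σ_{j_1+⋯+j_{r−1}=a, 0 ≤ j_s ≤ n_s} (a!/(j_1!⋯j_{r−1}!)) ∏_{s=1}^{r−1} ((α_s − 2y_s)^{j_s}/(n_s − j_s)!) E_{n_s−j_s}^{(α_s)}(y_s). -/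
/-! Write `C s = α s - 2 * y s`. Up to the factorials, the integrand is `F z * g z` with
`F z = ∏_{s < r} E_{n_s}(C_s z + y_s) / n_s!`, a polynomial of degree `M = n_1 + ⋯ + n_{r-1}`, and
`g z = E_{n_r}(C_r z + y_r) / n_r!`. The Appell property `E'_{m+1} = (m+1) E_m` shows that
`C_r^{-j} E_{n_r+j}(C_r z + y_r) / (n_r+j)!` are iterated antiderivatives of `g`, so `M + 1`
integrations by parts leave only boundary terms, and the multinomial Leibniz rule evaluates
`F^{(a)}(0)`. The line `z ↦ C z + y` sends `1` to `α - y`, so the reflection formula turns the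
values at `1` into the values at `0` up to the sign `(-1)^(n_1 + ⋯ + n_r + 1) = -1`. -/

/-- Higher-order Euler polynomial `E_m^{(α)}(z)` of real order `α`, defined as the `m`-th
Taylor coefficient (times `m!`) of the generating function `(2/(e^u+1))^α e^{uz}` at `u = 0`. -/
noncomputable def eulerH (α : ℝ) (m : ℕ) (z : ℝ) : ℝ :=
  iteratedDeriv m (fun u : ℝ => (2 / (Real.exp u + 1)) ^ α * Real.exp (u * z)) 0

open Finset Real
open scoped ContDiff

lemma contDiff_two_div_exp_add_one_rpow (α : ℝ) :
    ContDiff ℝ ∞ (fun u : ℝ => (2 / (exp u + 1)) ^ α) :=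
  contDiff_iff_contDiffAt.mpr fun u =>
    (contDiffAt_rpow_const_of_ne (by positivity)).comp u
      (contDiff_const.div (by fun_prop) fun x => by positivity).contDiffAt

lemma eulerH_eq_sum (α : ℝ) (m : ℕ) (z : ℝ) :
    eulerH α m z = ∑ i ∈ range (m + 1), (m.choose i : ℝ) * eulerH α i 0 * z ^ (m - i) := by
  have hexp : ∀ l, iteratedDeriv l (fun u : ℝ => exp (u * z)) 0 = z ^ l := fun l => by
    simp_rw [mul_comm _ z, iteratedDeriv_exp_const_mul]; simp
  have hcoeff : ∀ i, eulerH α i 0 = iteratedDeriv i (fun u : ℝ => (2 / (exp u + 1)) ^ α) 0 :=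
    fun i => by simp [eulerH]
  rw [eulerH, iteratedDeriv_fun_mul
    ((contDiff_two_div_exp_add_one_rpow α).of_le (mod_cast le_top)).contDiffAt (by fun_prop)]
  simp_rw [hcoeff, hexp]

lemma contDiff_eulerH (α : ℝ) (m : ℕ) : ContDiff ℝ ∞ (eulerH α m) := by
  rw [funext (eulerH_eq_sum α m)]
  fun_prop

lemma eulerH_degree_zero (α z : ℝ) : eulerH α 0 z = 1 := by
  norm_num [eulerH]

lemma hasDerivAt_eulerH (α : ℝ) (m : ℕ) (z : ℝ) :
    HasDerivAt (eulerH α (m + 1)) ((m + 1) * eulerH α m z) z := by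
  rw [funext (eulerH_eq_sum α (m + 1))]
  refine (HasDerivAt.fun_sum fun i _ =>
    (hasDerivAt_pow (m + 1 - i) z).const_mul ((m + 1).choose i * eulerH α i 0)).congr_deriv ?_
  rw [sum_range_succ _ (m + 1), Nat.sub_self, Nat.cast_zero, zero_mul, mul_zero, add_zero,
    eulerH_eq_sum, mul_sum]
  refine sum_congr rfl fun i _ => ?_
  have hchoose : ((m.choose i * (m + 1) : ℕ) : ℝ) = ((m + 1).choose i * (m + 1 - i) : ℕ) :=
    congrArg _ (Nat.choose_mul_succ_eq m i)
  push_cast at hchoose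
  rw [show m + 1 - i - 1 = m - i by omega]
  linear_combination -(eulerH α i 0 * z ^ (m - i)) * hchoose

lemma eulerH_self_sub (α : ℝ) (m : ℕ) (z : ℝ) :
    eulerH α m (α - z) = (-1) ^ m * eulerH α m z := by
  have key : (fun u : ℝ => (2 / (exp u + 1)) ^ α * exp (u * (α - z)))
      = fun u => (2 / (exp (-u) + 1)) ^ α * exp (-u * z) := by
    funext u
    have h : 2 / (exp (-u) + 1) = 2 / (exp u + 1) * exp u := by
      rw [exp_neg]; field_simp; ring
    rw [h, mul_rpow (by positivity) (exp_pos u).le, ← exp_mul, mul_assoc, ← exp_add]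
    ring_nf
  rw [eulerH, key, iteratedDeriv_comp_neg m (fun v => (2 / (exp v + 1)) ^ α * exp (v * z)),
    neg_zero, smul_eq_mul, eulerH]

theorem iteratedDeriv_finset_prod {ι 𝕜 𝔸 : Type*} [DecidableEq ι] [NontriviallyNormedField 𝕜]
    [NormedCommRing 𝔸] [NormedAlgebra 𝕜 𝔸] {s : Finset ι} {f : ι → 𝕜 → 𝔸} {n : ℕ}
    (hf : ∀ i ∈ s, ContDiff 𝕜 n (f i)) (x : 𝕜) :
    iteratedDeriv n (fun x => ∏ i ∈ s, f i x) x =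
      ∑ k ∈ s.piAntidiag n, (Nat.multinomial s k : 𝔸) * ∏ i ∈ s, iteratedDeriv (k i) (f i) x := by
  induction s using Finset.cons_induction generalizing n with
  | empty => cases n <;> simp [iteratedDeriv_const]
  | cons a s ha ih =>
    have hs : ∀ m ≤ n, ∀ i ∈ s, ContDiff 𝕜 m (f i) := fun m hm i hi =>
      (hf i (mem_cons_of_mem hi)).of_le (mod_cast hm)
    simp_rw [prod_cons]
    rw [iteratedDeriv_fun_mul (hf a (mem_cons_self a s)).contDiffAt
      (contDiff_prod (hs n le_rfl)).contDiffAt, piAntidiag_cons, sum_disjiUnion,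
      ← Nat.sum_antidiagonal_eq_sum_range_succ
        (fun i j => (n.choose i : 𝔸) * iteratedDeriv i (f a) x *
          iteratedDeriv j (fun x => ∏ i ∈ s, f i x) x)]
    refine sum_congr rfl fun p hp => ?_
    rw [HasAntidiagonal.mem_antidiagonal] at hp
    rw [ih (hs p.2 (by omega)), sum_map, mul_sum]
    refine sum_congr rfl fun g hg => ?_
    rw [mem_piAntidiag] at hg
    have hga : g a = 0 := by_contra fun h => ha (hg.2 a h)
    have hgs : ∀ i ∈ s, g i + (if i = a then p.1 else 0) = g i := fun i hi => by
      simp [ne_of_mem_of_not_mem hi ha]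
    have hm : Nat.multinomial s (g + fun t => if t = a then p.1 else 0) = Nat.multinomial s g :=
      Nat.multinomial_congr hgs
    simp only [addRightEmbedding_apply, Nat.multinomial_cons, Pi.add_apply, hga, if_pos, zero_add]
    rw [hm, prod_congr rfl fun i hi => congrArg (iteratedDeriv · (f i) x) (hgs i hi),
      sum_congr rfl hgs, hg.1, hp, Nat.cast_mul]
    ring

lemma iteratedDeriv_const_sub_of_comp_eq_smul {𝕜 F : Type*} [NontriviallyNormedField 𝕜]
    [NormedAddCommGroup F] [NormedSpace 𝕜 F] {f : 𝕜 → F} {c s : 𝕜}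
    (h : ∀ x, f (c - x) = s • f x) (n : ℕ) (x : 𝕜) :
    iteratedDeriv n f (c - x) = ((-1) ^ n * s) • iteratedDeriv n f x := by
  have hn := congrFun (iteratedDeriv_comp_const_sub n f c) x
  rw [funext h, iteratedDeriv_fun_const_smul_field] at hn
  rw [mul_smul, hn, smul_smul, ← mul_pow, neg_one_mul, neg_neg, one_pow, one_smul]

theorem intervalIntegral.integral_mul_eq_sum_iteratedDeriv {f : ℝ → ℝ} (hf : ContDiff ℝ ∞ f)
    {G : ℕ → ℝ → ℝ} (hG : ∀ j x, HasDerivAt (G (j + 1)) (G j x) x) (hG₀ : Continuous (G 0))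
    {M : ℕ} (hM : iteratedDeriv M f = 0) (a b : ℝ) :
    ∫ x in a..b, f x * G 0 x = ∑ i ∈ range M,
      (-1) ^ i * (iteratedDeriv i f b * G (i + 1) b - iteratedDeriv i f a * G (i + 1) a) := by
  induction M generalizing f G with
  | zero => simp [show f = 0 from hM]
  | succ M ih =>
    have hf' : ContDiff ℝ ∞ (deriv f) := (contDiff_infty_iff_deriv.mp hf).2
    rw [intervalIntegral.integral_mul_deriv_eq_deriv_mul
      (fun x _ => (hf.differentiable (by simp) x).hasDerivAt) (fun x _ => hG 0 x)
      (hf'.continuous.intervalIntegrable a b) (hG₀.intervalIntegrable a b),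
      ih (G := fun j => G (j + 1)) hf' (fun j x => hG (j + 1) x)
        (continuous_iff_continuousAt.mpr fun x => (hG 0 x).continuousAt)
        (by rwa [← iteratedDeriv_succ']),
      sum_range_succ' _ M]
    simp only [iteratedDeriv_succ', iteratedDeriv_zero, pow_succ, pow_zero, mul_neg_one, neg_mul,
      sum_neg_distrib, one_mul]
    ring

lemma hasDerivAt_eulerH_comp_div_factorial (α C y : ℝ) (m : ℕ) (z : ℝ) :
    HasDerivAt (fun z => eulerH α (m + 1) (C * z + y) / (m + 1).factorial)
      (C * (eulerH α m (C * z + y) / m.factorial)) z := by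
  have hline : HasDerivAt (fun z => C * z + y) C z := by
    simpa using ((hasDerivAt_id z).const_mul C).add_const y
  refine (((hasDerivAt_eulerH α m (C * z + y)).comp z hline).div_const _).congr_deriv ?_
  rw [Nat.factorial_succ, Nat.cast_mul]
  field_simp
  push_cast
  ring

lemma iteratedDeriv_eulerH_comp_div_factorial (α C y : ℝ) (m j : ℕ) :
    iteratedDeriv j (fun z => eulerH α m (C * z + y) / m.factorial) = fun z =>
      if j ≤ m then C ^ j * (eulerH α (m - j) (C * z + y) / (m - j).factorial) else 0 := by
  induction j with
  | zero => simp
  | succ j ih =>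
    rw [iteratedDeriv_succ, ih]
    funext z
    by_cases hj : j + 1 ≤ m
    · obtain ⟨l, rfl⟩ : ∃ l, m = j + 1 + l := ⟨m - (j + 1), by omega⟩
      simp only [show j ≤ j + 1 + l by omega, hj, if_true, show j + 1 + l - j = l + 1 by omega,
        show j + 1 + l - (j + 1) = l by omega]
      rw [((hasDerivAt_eulerH_comp_div_factorial α C y l z).const_mul (C ^ j)).deriv]
      ring
    · have hconst : (fun z => if j ≤ m then C ^ j * (eulerH α (m - j) (C * z + y) /
          (m - j).factorial) else 0) = fun _ => if j ≤ m then C ^ j else 0 := by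
        funext z
        split_ifs
        · simp [show m - j = 0 by omega, eulerH_degree_zero]
        · rfl
      rw [if_neg hj, hconst, deriv_const]

lemma iteratedDeriv_prod_eulerH {k : ℕ} (α C y : Fin k → ℝ) (n : Fin k → ℕ) (a : ℕ) (x : ℝ) :
    iteratedDeriv a (fun z => ∏ i, eulerH (α i) (n i) (C i * z + y i) / (n i).factorial) x =
      ∑ j ∈ (Nat.antidiagonalTuple k a).filter (fun j => ∀ i, j i ≤ n i),
        ((a.factorial : ℝ) / ∏ i, ((j i).factorial : ℝ)) *
          ∏ i, C i ^ j i / ((n i - j i).factorial : ℝ) *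
            eulerH (α i) (n i - j i) (C i * x + y i) := by
  have hsmooth : ∀ i ∈ univ, ContDiff ℝ a
      (fun z => eulerH (α i) (n i) (C i * z + y i) / (n i).factorial) := fun i _ =>
    (((contDiff_eulerH _ _).comp (by fun_prop)).div_const _).of_le (mod_cast le_top)
  rw [iteratedDeriv_finset_prod hsmooth, piAntidiag_univ_fin_eq_antidiagonalTuple, sum_filter]
  refine sum_congr rfl fun j hj => ?_
  simp_rw [iteratedDeriv_eulerH_comp_div_factorial]
  split_ifs with hle
  · have hmultinomial :
        (Nat.multinomial univ j : ℝ) = a.factorial / ∏ i, ((j i).factorial : ℝ) := by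
      rw [eq_div_iff (by positivity), ← Nat.mem_antidiagonalTuple.mp hj,
        ← Nat.multinomial_spec univ j]
      push_cast
      ring
    rw [hmultinomial, prod_congr rfl fun i _ => if_pos (hle i)]
    refine congrArg _ (prod_congr rfl fun i _ => ?_)
    ring
  · obtain ⟨i, hi⟩ := not_forall.mp hle
    rw [prod_eq_zero (mem_univ i) (if_neg hi), mul_zero]

lemma iteratedDeriv_prod_eulerH_eq_zero {k : ℕ} (α C y : Fin k → ℝ) (n : Fin k → ℕ) {a : ℕ}
    (ha : ∑ i, n i < a) :
    iteratedDeriv a (fun z => ∏ i, eulerH (α i) (n i) (C i * z + y i) / (n i).factorial) = 0 := by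
  funext x
  rw [iteratedDeriv_prod_eulerH, Pi.zero_apply]
  convert sum_empty
  refine filter_eq_empty_iff.mpr fun j hj hle => ?_
  have := sum_le_sum fun i (_ : i ∈ univ) => hle i
  rw [Nat.mem_antidiagonalTuple.mp hj] at this
  omega

lemma prod_eulerH_one_sub {ι : Type*} [Fintype ι] (α y : ι → ℝ) (n : ι → ℕ) (z : ℝ) :
    ∏ i, eulerH (α i) (n i) ((α i - 2 * y i) * (1 - z) + y i) / (n i).factorial =
      (-1) ^ (∑ i, n i) *
        ∏ i, eulerH (α i) (n i) ((α i - 2 * y i) * z + y i) / (n i).factorial := by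
  rw [← prod_pow_eq_pow_sum, ← prod_mul_distrib]
  refine prod_congr rfl fun i _ => ?_
  rw [show (α i - 2 * y i) * (1 - z) + y i = α i - ((α i - 2 * y i) * z + y i) by ring,
    eulerH_self_sub]
  ring

lemma iteratedDeriv_prod_eulerH_one_sub {ι : Type*} [Fintype ι] (α y : ι → ℝ) (n : ι → ℕ)
    (a : ℕ) (x : ℝ) :
    iteratedDeriv a
        (fun z => ∏ i, eulerH (α i) (n i) ((α i - 2 * y i) * z + y i) / (n i).factorial) (1 - x) =
      (-1) ^ a * (-1) ^ (∑ i, n i) * iteratedDeriv a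
        (fun z => ∏ i, eulerH (α i) (n i) ((α i - 2 * y i) * z + y i) / (n i).factorial) x := by
  rw [iteratedDeriv_const_sub_of_comp_eq_smul
    (fun z => (prod_eulerH_one_sub α y n z).trans (smul_eq_mul _ _).symm), smul_eq_mul]

lemma hasDerivAt_zpow_mul_eulerH_comp (α y : ℝ) {C : ℝ} (hC : C ≠ 0) (m j : ℕ) (x : ℝ) :
    HasDerivAt (fun z => C ^ (-((j + 1 : ℕ) : ℤ)) *
        (eulerH α (m + j + 1) (C * z + y) / (m + j + 1).factorial))
      (C ^ (-(j : ℤ)) * (eulerH α (m + j) (C * x + y) / (m + j).factorial)) x := by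
  refine ((hasDerivAt_eulerH_comp_div_factorial α C y _ x).const_mul _).congr_deriv ?_
  rw [Nat.cast_succ, neg_add, zpow_add₀ hC, zpow_neg_one]
  field_simp

theorem integral_prod_eulerH_mul_eulerH {k : ℕ} (α y : Fin k → ℝ) (n : Fin k → ℕ) {β w : ℝ}
    (hC : β - 2 * w ≠ 0) (m : ℕ) (heven : Even (∑ i, n i + m)) :
    ∫ z in (0 : ℝ)..1,
        (∏ i, eulerH (α i) (n i) ((α i - 2 * y i) * z + y i) / (n i).factorial) *
          (eulerH β m ((β - 2 * w) * z + w) / m.factorial) =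
      -2 * ∑ a ∈ range (∑ i, n i + 1), (-1) ^ a *
        iteratedDeriv a
          (fun z => ∏ i, eulerH (α i) (n i) ((α i - 2 * y i) * z + y i) / (n i).factorial) 0 *
        ((β - 2 * w) ^ (-((a + 1 : ℕ) : ℤ)) *
          (eulerH β (m + a + 1) w / (m + a + 1).factorial)) := by
  set F := fun z => ∏ i, eulerH (α i) (n i) ((α i - 2 * y i) * z + y i) / (n i).factorial
  set C := β - 2 * w
  set G := fun (j : ℕ) z => C ^ (-(j : ℤ)) * (eulerH β (m + j) (C * z + w) / (m + j).factorial)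
  have hF : ContDiff ℝ ∞ F := contDiff_prod fun i _ =>
    ((contDiff_eulerH _ _).comp (by fun_prop)).div_const _
  have hG₀ : Continuous (G 0) :=
    ((contDiff_eulerH _ _).continuous.comp (by fun_prop)).div_const _ |>.const_mul _
  have hG0 : ∀ z, G 0 z = eulerH β m (C * z + w) / m.factorial := fun z => by
    simp only [G, Nat.cast_zero, neg_zero, zpow_zero, one_mul, add_zero]
  refine (intervalIntegral.integral_congr (g := fun z => F z * G 0 z) fun z _ => ?_).trans ?_
  · exact congrArg (F z * ·) (hG0 z).symm
  rw [intervalIntegral.integral_mul_eq_sum_iteratedDeriv hF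
      (hasDerivAt_zpow_mul_eulerH_comp β w hC m) hG₀
      (iteratedDeriv_prod_eulerH_eq_zero _ _ _ _ (Nat.lt_succ_self _)), mul_sum]
  refine sum_congr rfl fun a _ => ?_
  have hF1 : iteratedDeriv a F 1 = (-1) ^ a * (-1) ^ (∑ i, n i) * iteratedDeriv a F 0 := by
    simpa only [sub_zero] using iteratedDeriv_prod_eulerH_one_sub α y n a 0
  have hG1 : G (a + 1) 1 = (-1) ^ (m + a + 1) * G (a + 1) 0 := by
    simp only [G, mul_one, mul_zero, zero_add, ← add_assoc]
    rw [show C + w = β - w by ring, eulerH_self_sub]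
    ring
  have hsign : (-1 : ℝ) ^ a * (-1) ^ (∑ i, n i) * (-1) ^ (m + a + 1) = -1 := by
    obtain ⟨t, ht⟩ := heven
    rw [← pow_add, ← pow_add]
    exact Odd.neg_one_pow ⟨t + a, by omega⟩
  have hGa0 : G (a + 1) 0 = C ^ (-((a + 1 : ℕ) : ℤ)) *
      (eulerH β (m + a + 1) w / (m + a + 1).factorial) := by
    simp only [G, mul_zero, zero_add, ← add_assoc]
  rw [hF1, hG1, ← hGa0]
  linear_combination ((-1) ^ a * iteratedDeriv a F 0 * G (a + 1) 0) * hsign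

-- `r = k + 1`: the indices `1, …, r - 1` are the `i.castSucc` (`i : Fin k`), `r` is `Fin.last k`.
/-- STATEMENT 6, with `r = k + 1 ≥ 1`; the first `r - 1` indices are the `i.castSucc` for
`i : Fin k` and the last index is `Fin.last k`. Terms of the inner sum in which some
`j s > n s` are taken to be zero (implemented by filtering them out). -/
theorem stmt_6 (k : ℕ) (α y : Fin (k + 1) → ℝ) (hy : ∀ s, y s ≠ α s / 2)
    (n : Fin (k + 1) → ℕ) (heven : Even (∑ s, n s)) :
    (1 / ∏ s, ((n s).factorial : ℝ)) *
        ∫ z in (0 : ℝ)..1, ∏ s, eulerH (α s) (n s) ((α s - 2 * y s) * z + y s)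
      = -2 * ∑ a ∈ Finset.range ((∑ i : Fin k, n i.castSucc) + 1), (-1 : ℝ) ^ a *
          ((α (Fin.last k) - 2 * y (Fin.last k)) ^ (-(a : ℤ) - 1) /
            ((n (Fin.last k) + a + 1).factorial : ℝ)) *
          eulerH (α (Fin.last k)) (n (Fin.last k) + a + 1) (y (Fin.last k)) *
          ∑ j ∈ (Finset.Nat.antidiagonalTuple k a).filter
              (fun j => ∀ i, j i ≤ n i.castSucc),
            ((a.factorial : ℝ) / ∏ i, ((j i).factorial : ℝ)) *
            ∏ i, ((α i.castSucc - 2 * y i.castSucc) ^ (j i) /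
                ((n i.castSucc - j i).factorial : ℝ)) *
              eulerH (α i.castSucc) (n i.castSucc - j i) (y i.castSucc) := by
  set r := Fin.last k
  have hC : α r - 2 * y r ≠ 0 := fun h => hy r (by linarith)
  have hintegrand : ∀ z, (1 / ∏ s, ((n s).factorial : ℝ)) *
      ∏ s, eulerH (α s) (n s) ((α s - 2 * y s) * z + y s) =
        (∏ i : Fin k, eulerH (α i.castSucc) (n i.castSucc)
          ((α i.castSucc - 2 * y i.castSucc) * z + y i.castSucc) / (n i.castSucc).factorial) *
        (eulerH (α r) (n r) ((α r - 2 * y r) * z + y r) / (n r).factorial) := fun z => by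
    simp only [Fin.prod_univ_castSucc, prod_div_distrib]
    ring
  rw [Fin.sum_univ_castSucc] at heven
  rw [← intervalIntegral.integral_const_mul,
    intervalIntegral.integral_congr fun z _ => hintegrand z,
    integral_prod_eulerH_mul_eulerH _ _ _ hC _ heven]
  refine congrArg _ (sum_congr rfl fun a _ => ?_)
  rw [iteratedDeriv_prod_eulerH, show -(a : ℤ) - 1 = -((a + 1 : ℕ) : ℤ) by push_cast; ring]
  simp only [mul_zero, zero_add]
  ring
end

section
/- Let b_1, b_2 be nonzero real numbers, y_1, y_2 real numbers, β, γ real orders, and m, n nonnegative integers. Then for every real x: Σ_{a=0}^{m+n+1} (−1)^a C(m+n+1, a) b_1^a b_2^{m+n+1−a} E_{m+n+1−a}^{(γ)}(b_1 x + y_1) E_a^{(β)}(b_2 x + y_2) = Σ_{a=0}^{m+n+1} (−1)^a C(m+n+1, a) b_1^a b_2^{m+n+1−a} E_{m+n+1−a}^{(γ)}(y_1) E_a^{(β)}(y_2); that is, this alternating binomial sum is independent of x. -/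
open Finset

noncomputable def eulerGen (α z u : ℝ) : ℝ :=
  (2 / (Real.exp u + 1)) ^ α * Real.exp (u * z)

lemma eulerH_eq_iteratedDeriv_eulerGen (α : ℝ) (m : ℕ) (z : ℝ) :
    eulerH α m z = iteratedDeriv m (eulerGen α z) 0 := rfl

lemma contDiff_eulerGen (α z : ℝ) {n : WithTop ℕ∞} : ContDiff ℝ n (eulerGen α z) := by
  have hden : ContDiff ℝ n fun u : ℝ => 2 / (Real.exp u + 1) :=
    contDiff_const.div (Real.contDiff_exp.add contDiff_const) fun u => by positivity
  exact (hden.rpow contDiff_const fun u => by positivity).mul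
    (Real.contDiff_exp.comp (contDiff_id.mul contDiff_const))

lemma eulerGen_add (α z w u : ℝ) :
    eulerGen α (z + w) u = eulerGen α z u * Real.exp (u * w) := by
  rw [eulerGen, eulerGen, mul_add, Real.exp_add, mul_assoc]

lemma iteratedDeriv_eulerGen_comp_mul (α z c : ℝ) (k : ℕ) :
    iteratedDeriv k (fun u => eulerGen α z (c * u)) 0 = c ^ k * eulerH α k z := by
  simp only [iteratedDeriv_comp_const_mul (contDiff_eulerGen α z) c, mul_zero,
    eulerH_eq_iteratedDeriv_eulerGen]

lemma iteratedDeriv_eulerGen_mul_eulerGen (α β z w c d : ℝ) (N : ℕ) :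
    iteratedDeriv N (fun u => eulerGen α z (c * u) * eulerGen β w (d * u)) 0
      = ∑ a ∈ range (N + 1),
          (N.choose a : ℝ) * (c ^ a * eulerH α a z) * (d ^ (N - a) * eulerH β (N - a) w) := by
  have hcomp : ∀ (γ y e : ℝ), ContDiffAt ℝ N (fun u => eulerGen γ y (e * u)) 0 := fun γ y e =>
    ((contDiff_eulerGen γ y).comp (contDiff_const.mul contDiff_id)).contDiffAt
  simp only [iteratedDeriv_fun_mul (hcomp α z c) (hcomp β w d),
    iteratedDeriv_eulerGen_comp_mul]

lemma eulerGen_mul_eulerGen_shift (α β z w b₁ b₂ x u : ℝ) :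
    eulerGen α (b₂ * x + w) (-b₁ * u) * eulerGen β (b₁ * x + z) (b₂ * u)
      = eulerGen α w (-b₁ * u) * eulerGen β z (b₂ * u) := by
  rw [add_comm (b₂ * x), add_comm (b₁ * x), eulerGen_add, eulerGen_add]
  have hcancel : Real.exp (-b₁ * u * (b₂ * x)) * Real.exp (b₂ * u * (b₁ * x)) = 1 := by
    rw [← Real.exp_add, ← Real.exp_zero]
    ring_nf
  linear_combination (eulerGen α w (-b₁ * u) * eulerGen β z (b₂ * u)) * hcancel

theorem stmt_8_general (b₁ b₂ : ℝ) (y₁ y₂ β γ : ℝ) (m n : ℕ) (x : ℝ) :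
    ∑ a ∈ Finset.range (m + n + 2), (-1 : ℝ) ^ a * (Nat.choose (m + n + 1) a : ℝ) *
        b₁ ^ a * b₂ ^ (m + n + 1 - a) *
        eulerH γ (m + n + 1 - a) (b₁ * x + y₁) * eulerH β a (b₂ * x + y₂)
      = ∑ a ∈ Finset.range (m + n + 2), (-1 : ℝ) ^ a * (Nat.choose (m + n + 1) a : ℝ) *
        b₁ ^ a * b₂ ^ (m + n + 1 - a) *
        eulerH γ (m + n + 1 - a) y₁ * eulerH β a y₂ := by
  set N := m + n + 1
  have hsum : ∀ z₁ z₂ : ℝ,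
      ∑ a ∈ range (N + 1), (-1 : ℝ) ^ a * (N.choose a : ℝ) * b₁ ^ a * b₂ ^ (N - a) *
        eulerH γ (N - a) z₁ * eulerH β a z₂
      = iteratedDeriv N (fun u => eulerGen β z₂ (-b₁ * u) * eulerGen γ z₁ (b₂ * u)) 0 := by
    intro z₁ z₂
    rw [iteratedDeriv_eulerGen_mul_eulerGen]
    refine sum_congr rfl fun a _ => ?_
    rw [neg_pow]
    ring
  rw [show m + n + 2 = N + 1 from rfl, hsum, hsum]
  simp only [eulerGen_mul_eulerGen_shift]

theorem stmt_8 (b₁ b₂ : ℝ) (hb₁ : b₁ ≠ 0) (hb₂ : b₂ ≠ 0) (y₁ y₂ β γ : ℝ) (m n : ℕ) (x : ℝ) :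
    ∑ a ∈ Finset.range (m + n + 2), (-1 : ℝ) ^ a * (Nat.choose (m + n + 1) a : ℝ) *
        b₁ ^ a * b₂ ^ (m + n + 1 - a) *
        eulerH γ (m + n + 1 - a) (b₁ * x + y₁) * eulerH β a (b₂ * x + y₂)
      = ∑ a ∈ Finset.range (m + n + 2), (-1 : ℝ) ^ a * (Nat.choose (m + n + 1) a : ℝ) *
        b₁ ^ a * b₂ ^ (m + n + 1 - a) *
        eulerH γ (m + n + 1 - a) y₁ * eulerH β a y₂ :=
  stmt_8_general b₁ b₂ y₁ y₂ β γ m n x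
end

section
/- Let y_1, y_2 be real numbers, γ a real order, and m, n nonnegative integers. Then Σ_{a=0}^{n} (−1)^a C(m+n+1, n−a) B_{n−a}^{(γ)}(y_1) E_{m+a+1}^{(γ)}(y_2) − Σ_{a=0}^{m} (−1)^a C(m+n+1, m−a) E_{m−a}^{(γ)}(y_2) B_{n+a+1}^{(γ)}(y_1) = (−1)^n 2^{m+n+1} B_{m+n+1}^{(γ)}((γ − y_1 + y_2)/2). -/
/-- Higher-order Bernoulli polynomial `B_m^{(α)}(z)` of real order `α`, defined as the `m`-th
Taylor coefficient (times `m!`) of the generating function `(u/(e^u-1))^α e^{uz}` at `u = 0`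
(the removable singularity at `u = 0` being filled in with the limit value `1`). -/
noncomputable def bernoulliH (α : ℝ) (m : ℕ) (z : ℝ) : ℝ :=
  iteratedDeriv m
    (fun u : ℝ => (if u = 0 then (1 : ℝ) else u / (Real.exp u - 1)) ^ α * Real.exp (u * z)) 0

open Real Finset
open scoped ContDiff

theorem AnalyticOnNhd.dslope {𝕜 E : Type*} [NontriviallyNormedField 𝕜] [NormedAddCommGroup E]
    [NormedSpace 𝕜 E] {f : 𝕜 → E} {s : Set 𝕜} (hf : AnalyticOnNhd 𝕜 f s) (a : 𝕜) :
    AnalyticOnNhd 𝕜 (dslope f a) s := by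
  intro b hb
  rcases eq_or_ne b a with rfl | hba
  · obtain ⟨p, hp⟩ := hf b hb
    exact hp.has_fpower_series_dslope_fslope.analyticAt
  · refine AnalyticAt.congr ?_ (dslope_eventuallyEq_slope_of_ne f hba).symm
    have hinv : AnalyticAt 𝕜 (fun x => (x - a)⁻¹) b :=
      (analyticAt_id.sub analyticAt_const).inv (sub_ne_zero.mpr hba)
    exact hinv.smul ((hf b hb).sub analyticAt_const)

theorem neg_one_pow_mul_neg_one_pow_sub {R : Type*} [CommRing R] {a n : ℕ} (h : a ≤ n) :
    (-1 : R) ^ n * (-1) ^ (n - a) = (-1) ^ a := by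
  obtain ⟨k, rfl⟩ := Nat.exists_eq_add_of_le' h
  rw [Nat.add_sub_cancel, pow_add, mul_right_comm, ← pow_add, Even.neg_one_pow ⟨k, rfl⟩, one_mul]

noncomputable def bernoulliFactor (u : ℝ) : ℝ := if u = 0 then 1 else u / (exp u - 1)

theorem bernoulliFactor_eq_inv_dslope :
    bernoulliFactor = fun u => (dslope (fun v => exp v - 1) 0 u)⁻¹ := by
  funext u
  rcases eq_or_ne u 0 with rfl | hu
  · simp [bernoulliFactor, dslope_same]
  · simp [bernoulliFactor, hu, dslope_of_ne _ hu, slope_def_field]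

theorem bernoulliFactor_pos (u : ℝ) : 0 < bernoulliFactor u := by
  unfold bernoulliFactor
  split_ifs with hu
  · exact one_pos
  rcases lt_or_gt_of_ne hu with hneg | hpos
  · exact div_pos_of_neg_of_neg hneg (by linarith [exp_lt_one_iff.mpr hneg])
  · exact div_pos hpos (by linarith [one_lt_exp_iff.mpr hpos])

theorem contDiff_bernoulliFactor : ContDiff ℝ ∞ bernoulliFactor := by
  rw [bernoulliFactor_eq_inv_dslope]
  refine (((analyticOnNhd_rexp.sub analyticOnNhd_const).dslope 0).contDiff).inv fun u => ?_
  have := bernoulliFactor_pos u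
  rw [bernoulliFactor_eq_inv_dslope] at this
  exact (inv_pos.mp this).ne'

theorem bernoulliFactor_neg_mul (u : ℝ) :
    bernoulliFactor (-u) * (2 / (exp u + 1)) = bernoulliFactor (2 * u) * exp u := by
  rcases eq_or_ne u 0 with rfl | hu
  · norm_num [bernoulliFactor]
  have h₁ : exp u - 1 ≠ 0 := by simpa [sub_eq_zero] using hu
  have h₂ : exp u + 1 ≠ 0 := by positivity
  have h₃ : 1 - exp u ≠ 0 := by rwa [← neg_sub, neg_ne_zero]
  have h₄ : exp u ^ 2 - 1 ≠ 0 := by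
    rw [show exp u ^ 2 - 1 = (exp u - 1) * (exp u + 1) by ring]; exact mul_ne_zero h₁ h₂
  simp only [bernoulliFactor, neg_eq_zero, hu, mul_eq_zero, two_ne_zero, false_or, if_false,
    exp_neg, show exp (2 * u) = exp u ^ 2 by rw [← exp_nat_mul]; norm_num]
  field_simp
  ring

noncomputable def bernoulliGF (α y u : ℝ) : ℝ := bernoulliFactor u ^ α * exp (u * y)

noncomputable def eulerGF (α y u : ℝ) : ℝ := (2 / (exp u + 1)) ^ α * exp (u * y)

theorem bernoulliH_eq_iteratedDeriv (α : ℝ) (m : ℕ) (y : ℝ) :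
    bernoulliH α m y = iteratedDeriv m (bernoulliGF α y) 0 := rfl

theorem eulerH_eq_iteratedDeriv (α : ℝ) (m : ℕ) (y : ℝ) :
    eulerH α m y = iteratedDeriv m (eulerGF α y) 0 := rfl

theorem contDiff_bernoulliGF (α y : ℝ) : ContDiff ℝ ∞ (bernoulliGF α y) :=
  (contDiff_bernoulliFactor.rpow_const_of_ne fun u => (bernoulliFactor_pos u).ne').mul
    (by fun_prop)

theorem contDiff_eulerGF (α y : ℝ) : ContDiff ℝ ∞ (eulerGF α y) :=
  ((contDiff_const.div (contDiff_exp.add contDiff_const) fun u => by positivity).rpow_const_of_ne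
    fun u => (div_pos two_pos (by positivity)).ne').mul (by fun_prop)

theorem bernoulliGF_neg_mul_eulerGF (α y₁ y₂ u : ℝ) :
    bernoulliGF α y₁ (-u) * eulerGF α y₂ u = bernoulliGF α ((α - y₁ + y₂) / 2) (2 * u) := by
  have hfactor : bernoulliFactor (-u) ^ α * (2 / (exp u + 1)) ^ α
      = bernoulliFactor (2 * u) ^ α * exp (u * α) := by
    rw [← mul_rpow (bernoulliFactor_pos _).le (by positivity), bernoulliFactor_neg_mul,
      mul_rpow (bernoulliFactor_pos _).le (exp_pos u).le, ← exp_mul]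
  calc bernoulliGF α y₁ (-u) * eulerGF α y₂ u
      = bernoulliFactor (-u) ^ α * (2 / (exp u + 1)) ^ α * (exp (-u * y₁) * exp (u * y₂)) := by
        unfold bernoulliGF eulerGF; ring
    _ = bernoulliFactor (2 * u) ^ α * exp (u * α + (-u * y₁ + u * y₂)) := by
        rw [hfactor, exp_add, exp_add]; ring
    _ = bernoulliGF α ((α - y₁ + y₂) / 2) (2 * u) := by
        unfold bernoulliGF; congr 2; ring

theorem sum_choose_mul_bernoulliH_mul_eulerH (α y₁ y₂ : ℝ) (N : ℕ) :
    ∑ j ∈ range (N + 1), (N.choose j : ℝ) * ((-1) ^ j * bernoulliH α j y₁) * eulerH α (N - j) y₂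
      = 2 ^ N * bernoulliH α N ((α - y₁ + y₂) / 2) := by
  have hB : ContDiff ℝ ∞ fun u => bernoulliGF α y₁ (-u) :=
    (contDiff_bernoulliGF α y₁).comp contDiff_neg
  calc _ = iteratedDeriv N (fun u => bernoulliGF α y₁ (-u) * eulerGF α y₂ u) 0 := by
        rw [iteratedDeriv_fun_mul (contDiff_infty.mp hB N).contDiffAt
          (contDiff_infty.mp (contDiff_eulerGF α y₂) N).contDiffAt]
        simp [iteratedDeriv_comp_neg, bernoulliH_eq_iteratedDeriv, eulerH_eq_iteratedDeriv]
    _ = iteratedDeriv N (fun u => bernoulliGF α ((α - y₁ + y₂) / 2) (2 * u)) 0 := by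
        simp_rw [bernoulliGF_neg_mul_eulerGF]
    _ = _ := by
        rw [iteratedDeriv_comp_const_mul (contDiff_infty.mp (contDiff_bernoulliGF _ _) N)]
        simp [bernoulliH_eq_iteratedDeriv]

theorem sum_sub_sum_eq_neg_one_pow_mul_sum_choose {R : Type*} [CommRing R] (b e : ℕ → R)
    (m n : ℕ) :
    (∑ a ∈ range (n + 1), (-1) ^ a * ((m + n + 1).choose (n - a) : R) * b (n - a) * e (m + a + 1))
      - ∑ a ∈ range (m + 1), (-1) ^ a * ((m + n + 1).choose (m - a) : R) * e (m - a) * b (n + a + 1)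
      = (-1) ^ n * ∑ j ∈ range (m + n + 1 + 1),
          ((m + n + 1).choose j : R) * ((-1) ^ j * b j) * e (m + n + 1 - j) := by
  conv_rhs => rw [show m + n + 1 + 1 = (n + 1) + (m + 1) by omega, sum_range_add,
    ← sum_range_reflect _ (n + 1), mul_add, mul_sum, mul_sum]
  rw [sub_eq_add_neg, ← sum_neg_distrib]
  congr 1 <;> refine sum_congr rfl fun a ha => ?_ <;> rw [mem_range] at ha
  · rw [show n + 1 - 1 - a = n - a by omega, show m + n + 1 - (n - a) = m + a + 1 by omega,
      ← neg_one_pow_mul_neg_one_pow_sub (R := R) (show a ≤ n by omega)]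
    ring
  · have hsign := neg_one_pow_mul_neg_one_pow_sub (R := R) (show a + 1 ≤ n + a + 1 by omega)
    rw [show n + a + 1 - (a + 1) = n by omega] at hsign
    rw [show n + 1 + a = n + a + 1 by omega, show m + n + 1 - (n + a + 1) = m - a by omega,
      Nat.choose_symm_of_eq_add (show m + n + 1 = (n + a + 1) + (m - a) by omega)]
    linear_combination (-(((m + n + 1).choose (m - a) : R) * e (m - a) * b (n + a + 1))) * hsign

theorem stmt_16 (y₁ y₂ γ : ℝ) (m n : ℕ) :
    (∑ a ∈ Finset.range (n + 1), (-1 : ℝ) ^ a * (Nat.choose (m + n + 1) (n - a) : ℝ) *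
        bernoulliH γ (n - a) y₁ * eulerH γ (m + a + 1) y₂)
      - (∑ a ∈ Finset.range (m + 1), (-1 : ℝ) ^ a * (Nat.choose (m + n + 1) (m - a) : ℝ) *
        eulerH γ (m - a) y₂ * bernoulliH γ (n + a + 1) y₁)
    = (-1 : ℝ) ^ n * 2 ^ (m + n + 1) * bernoulliH γ (m + n + 1) ((γ - y₁ + y₂) / 2) := by
  rw [sum_sub_sum_eq_neg_one_pow_mul_sum_choose (bernoulliH γ · y₁) (eulerH γ · y₂),
    sum_choose_mul_bernoulliH_mul_eulerH, mul_assoc]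
end
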